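/- arXiv:1602.07093 — 2 statements merged into one kernel-verified Lean document; each statement's English description precedes it below -/
import Mathlib

section
/- Let F be a field of characteristic 2, let a,x ∈ F* and c₁,…,c_s ∈ F*, and let φ = a[1,x] ⊥ ⟨1,c₁,…,c_s⟩ be an anisotropic quadratic form over F. Let K/F be a field extension such that the Witt index of φ_K equals 1. Then the quaternion algebra [x,a) becomes split over the field K(√c₁,…,√c_s) obtained from K by adjoining square roots of c₁,…,c_s, i.e. [x,a) ⊗_F K(√c₁,…,√c_s) is isomorphic to the 2×2 matrix algebra over K(√c₁,…,√c_s). -/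
/-!
Over `K` the form `φ_K` contains a hyperbolic plane, so it has an isotropic vector `v` outside the
radical of its polar form. The polar form of a diagonal form vanishes in characteristic 2, so the
component `u` of `v` in `a[1,x]` is nonzero. Over `L = K(√c₁,…,√c_s)` the diagonal part
`⟨1,c₁,…,c_s⟩` becomes the square of a linear form, and `φ(v) = 0` reads `a·N(u) = w²`, where
`N = [1,x]` is the norm form of `L[℘⁻¹(x)]`. Hence `a` is a norm (if `N` is isotropic it is
hyperbolic and represents everything), and `[x,a)` splits: for `a = N(p,q)` the matrices
`I = (0 x; 1 1)` and `J = (p p+xq; q p)` satisfy the defining relations and `1, I, J, IJ` are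
linearly independent, so the induced map from `[x,a)`, of dimension at most 4, onto `M₂(L)` is an
isomorphism.
-/

open QuadraticMap MvPolynomial
open scoped TensorProduct

set_option synthInstance.maxHeartbeats 1000000
set_option maxHeartbeats 1000000


section Defs

variable {K : Type} [CommRing K]

/-- The binary quadratic form `[a,b] : (x,y) ↦ a·x² + x·y + b·y²`. -/
noncomputable def binQF (a b : K) : QuadraticForm K (Fin 2 → K) :=
  (Matrix.of ![![a, 1], ![0, b]]).toQuadraticMap'

/-- The diagonal (totally singular) quadratic form `⟨c₁, …, c_s⟩`. -/
noncomputable def diagQF {s : ℕ} (c : Fin s → K) : QuadraticForm K (Fin s → K) :=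
  QuadraticMap.weightedSumSquares K c

/-- The orthogonal sum `[a₁,b₁] ⊥ ⋯ ⊥ [a_r,b_r]` of binary forms. -/
noncomputable def binsQF {r : ℕ} (a b : Fin r → K) : QuadraticForm K (Fin r → Fin 2 → K) :=
  QuadraticMap.pi fun i => binQF (a i) (b i)

/-- The orthogonal sum of `m` hyperbolic planes `[0,0]`. -/
noncomputable def hypQF (K : Type) [CommRing K] (m : ℕ) :
    QuadraticForm K (Fin m → Fin 2 → K) :=
  binsQF (fun _ => 0) (fun _ => 0)

/-- The `(n+1)`-fold quadratic Pfister form `⟨⟨a₁,…,aₙ⟩⟩_b ⊗ [1,c]`, i.e. the orthogonal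
sum over all subsets `S ⊆ {1,…,n}` of `(∏_{i∈S} aᵢ)·[1,c]`. -/
noncomputable def pfisterQF (n : ℕ) (a : Fin n → K) (c : K) :
    QuadraticForm K (Finset (Fin n) → Fin 2 → K) :=
  QuadraticMap.pi fun S : Finset (Fin n) => (∏ i ∈ S, a i) • binQF 1 c

variable {V W : Type} [AddCommGroup V] [Module K V] [AddCommGroup W] [Module K W]

/-- `φ` has type `(r,s)`: it is isometric to `[a₁,b₁] ⊥ ⋯ ⊥ [a_r,b_r] ⊥ ⟨c₁,…,c_s⟩`. -/
def HasTypeRS (φ : QuadraticForm K V) (r s : ℕ) : Prop :=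
  ∃ (a b : Fin r → K) (c : Fin s → K), φ.Equivalent ((binsQF a b).prod (diagQF c))

/-- `φ` is dominated by `ψ`. -/
def Dominated (φ : QuadraticForm K V) (ψ : QuadraticForm K W) : Prop :=
  ∃ f : V →ₗ[K] W, Function.Injective f ∧ ∀ v, φ v = ψ (f v)

/-- `φ` is weakly dominated by `ψ`: `α·φ` is dominated by `ψ` for some unit `α`. -/
def WeaklyDominated (φ : QuadraticForm K V) (ψ : QuadraticForm K W) : Prop :=
  ∃ α : Kˣ, Dominated ((α : K) • φ) ψ

/-- Witt equivalence of quadratic forms. -/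
def WittEquiv (Q₁ : QuadraticForm K V) (Q₂ : QuadraticForm K W) : Prop :=
  ∃ k l : ℕ, (Q₁.prod (hypQF K k)).Equivalent (Q₂.prod (hypQF K l))

/-- `φ` is a Pfister neighbour: there is a quadratic Pfister form `π` with
`2·dim φ > dim π` and `φ ≺_w π`. -/
def IsPfisterNeighbour (φ : QuadraticForm K V) : Prop :=
  ∃ (n : ℕ) (a : Fin n → Kˣ) (c : K),
    2 * Module.finrank K V > 2 ^ (n + 1) ∧
      WeaklyDominated φ (pfisterQF n (fun i => (a i : K)) c)

/-- The Artin–Schreier set `℘(K) = {t² + t : t ∈ K}`. -/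
def ArtinSchreier (K : Type) [CommRing K] : Set K := {x : K | ∃ t : K, x = t ^ 2 + t}

end Defs

section FunField

variable (F : Type) [Field F]

/-- The coefficient matrix of a quadratic form on `Fin n → F` with respect to the
standard basis: diagonal entries `ψ(eᵢ)`, above-diagonal entries `b_ψ(eᵢ,eⱼ)`. -/
noncomputable def coeffMat {n : ℕ} (ψ : QuadraticForm F (Fin n → F)) :
    Matrix (Fin n) (Fin n) F :=
  Matrix.of fun i j =>
    if i = j then ψ (Pi.single i 1)
    else if i < j then polar ψ (Pi.single i 1) (Pi.single j 1) else 0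

/-- The homogeneous degree 2 polynomial `P_ψ` associated to a quadratic form `ψ`. -/
noncomputable def qfPoly {n : ℕ} (ψ : QuadraticForm F (Fin n → F)) :
    MvPolynomial (Fin n) F :=
  ∑ i : Fin n, ∑ j : Fin n, MvPolynomial.C (coeffMat F ψ i j) * (X i * X j)

/-- The affine coordinate ring `F[x₁,…,xₙ]/(P_ψ)` of the quadric `ψ = 0`. -/
def FunFieldRing {n : ℕ} (ψ : QuadraticForm F (Fin n → F)) : Type :=
  MvPolynomial (Fin n) F ⧸ Ideal.span {qfPoly F ψ}

noncomputable instance {n : ℕ} (ψ : QuadraticForm F (Fin n → F)) :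
    CommRing (FunFieldRing F ψ) :=
  inferInstanceAs (CommRing (MvPolynomial (Fin n) F ⧸ Ideal.span {qfPoly F ψ}))

noncomputable instance {n : ℕ} (ψ : QuadraticForm F (Fin n → F)) :
    Algebra F (FunFieldRing F ψ) :=
  inferInstanceAs (Algebra F (MvPolynomial (Fin n) F ⧸ Ideal.span {qfPoly F ψ}))

/-- The function field `F(ψ)` of the quadric `ψ = 0`. -/
def FunField {n : ℕ} (ψ : QuadraticForm F (Fin n → F)) : Type :=
  FractionRing (FunFieldRing F ψ)

noncomputable instance {n : ℕ} (ψ : QuadraticForm F (Fin n → F)) :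
    CommRing (FunField F ψ) :=
  inferInstanceAs (CommRing (FractionRing (FunFieldRing F ψ)))

noncomputable instance {n : ℕ} (ψ : QuadraticForm F (Fin n → F)) :
    Algebra (FunFieldRing F ψ) (FunField F ψ) :=
  inferInstanceAs (Algebra (FunFieldRing F ψ) (FractionRing (FunFieldRing F ψ)))

noncomputable instance {n : ℕ} (ψ : QuadraticForm F (Fin n → F)) :
    Algebra F (FunField F ψ) :=
  inferInstanceAs (Algebra F (FractionRing (FunFieldRing F ψ)))

/-- The canonical map `F → F(ψ)`. -/
noncomputable def funFieldMap {n : ℕ} (ψ : QuadraticForm F (Fin n → F)) :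
    F →+* FunField F ψ :=
  algebraMap F (FunField F ψ)

/-- Scalar extension of a quadratic form on `Fin n → F` along a ring homomorphism
`f : F → K`. -/
noncomputable def extendQF {K : Type} [CommRing K] (f : F →+* K) {n : ℕ}
    (φ : QuadraticForm F (Fin n → F)) : QuadraticForm K (Fin n → K) :=
  ((coeffMat F φ).map f).toQuadraticMap'

end FunField


section Quat

variable (K : Type) [CommRing K]

/-- Defining relations for the char-2 quaternion algebra `[a,b)`: generators `i,j` with
`i² + i = a`, `j² = b`, `j·i = i·j + j` (i.e. `j·i·j⁻¹ = i + 1`). -/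
inductive QuatRel (a b : K) : FreeAlgebra K (Fin 2) → FreeAlgebra K (Fin 2) → Prop
  | i_sq : QuatRel a b (FreeAlgebra.ι K 0 * FreeAlgebra.ι K 0 + FreeAlgebra.ι K 0)
      (algebraMap K _ a)
  | j_sq : QuatRel a b (FreeAlgebra.ι K 1 * FreeAlgebra.ι K 1) (algebraMap K _ b)
  | swap : QuatRel a b (FreeAlgebra.ι K 1 * FreeAlgebra.ι K 0)
      (FreeAlgebra.ι K 0 * FreeAlgebra.ι K 1 + FreeAlgebra.ι K 1)

/-- The quaternion algebra `[a,b)` over `K` (characteristic two convention). -/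
def QuatAlg (a b : K) : Type := RingQuot (QuatRel K a b)

noncomputable instance (a b : K) : Ring (QuatAlg K a b) :=
  inferInstanceAs (Ring (RingQuot (QuatRel K a b)))
noncomputable instance (a b : K) : Algebra K (QuatAlg K a b) :=
  inferInstanceAs (Algebra K (RingQuot (QuatRel K a b)))

/-- `[a,b)` is split over `K`: isomorphic to the `2×2` matrix algebra. -/
def QuatSplit (a b : K) : Prop :=
  Nonempty (QuatAlg K a b ≃ₐ[K] Matrix (Fin 2) (Fin 2) K)

end Quat

section Sqrt

variable (F : Type) [Field F]

/-- The field `F(√c₁,…,√c_s)` obtained by adjoining square roots of the `cᵢ`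
(inside an algebraic closure of `F`). -/
noncomputable def sqrtExt {s : ℕ} (c : Fin s → F) :
    IntermediateField F (AlgebraicClosure F) :=
  IntermediateField.adjoin F
    {y : AlgebraicClosure F | ∃ i, y ^ 2 = algebraMap F (AlgebraicClosure F) (c i)}

/-- The subfield `F² = {x² : x ∈ F}` of squares of a field of characteristic 2. -/
noncomputable def sqSubfield : Subfield F := Subfield.closure (Set.range fun x : F => x ^ 2)

set_option synthInstance.maxHeartbeats 1000000 in
/-- The norm degree `[F²(cᵢ·cⱼ) : F²]` of a diagonal form `⟨c₁,…,c_s⟩`. -/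
noncomputable def normDegree {s : ℕ} (c : Fin s → F) : ℕ :=
  Module.finrank (sqSubfield F)
    (IntermediateField.adjoin (sqSubfield F)
      (Set.range fun p : Fin s × Fin s => c p.1 * c p.2))

end Sqrt

/-- A ring is a division algebra if it is nontrivial and every nonzero element is a unit. -/
def IsDivisionAlgebra (T : Type) [Ring T] : Prop :=
  (0 : T) ≠ 1 ∧ ∀ x : T, x ≠ 0 → IsUnit x

lemma binQF_apply {K : Type} [CommRing K] (a b : K) (v : Fin 2 → K) :
    binQF a b v = a * v 0 ^ 2 + v 0 * v 1 + b * v 1 ^ 2 := by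
  simp [binQF, Matrix.toQuadraticMap', Matrix.toQuadraticForm',
    LinearMap.BilinMap.toQuadraticMap_apply, Matrix.toLinearMap₂'_apply, Fin.sum_univ_two]
  ring

section CharTwo

variable {R : Type} [CommRing R] [CharP R 2] {s : ℕ}

lemma diagQF_apply_eq_sq {c r : Fin s → R} (hr : ∀ i, r i ^ 2 = c i) (v : Fin s → R) :
    diagQF c v = (∑ i, r i * v i) ^ 2 := by
  rw [sum_pow_char, diagQF, weightedSumSquares_apply]
  exact Finset.sum_congr rfl fun i _ => by rw [smul_eq_mul, mul_pow, hr, _root_.sq]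

lemma polar_diagQF (c : Fin s → R) (v w : Fin s → R) : polar (diagQF c) v w = 0 := by
  simp only [polar, diagQF, weightedSumSquares_apply, ← Finset.sum_sub_distrib]
  exact Finset.sum_eq_zero fun i _ => by simp only [Pi.add_apply, smul_eq_mul]; grind

lemma fst_ne_zero_of_polar_prod_diagQF_ne_zero {M : Type} [AddCommGroup M] [Module R M]
    {Q : QuadraticForm R M} {c : Fin s → R} {v w : M × (Fin s → R)}
    (h : polar (Q.prod (diagQF c)) v w ≠ 0) : v.1 ≠ 0 := by
  intro hv₁
  rw [polar_prod, hv₁, polar_zero_left, polar_diagQF, add_zero] at h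
  exact h rfl

end CharTwo

lemma exists_isotropic_polar_ne_zero {K V U W : Type} [CommRing K] [Nontrivial K]
    [AddCommGroup V] [Module K V] [AddCommGroup U] [Module K U] [AddCommGroup W] [Module K W]
    {Q : QuadraticForm K V} {φ : QuadraticForm K U} {z : QuadraticForm K W}
    (h : Q.Equivalent ((φ.prod (hypQF K 1)).prod z)) : ∃ v w, Q v = 0 ∧ polar Q v w ≠ 0 := by
  obtain ⟨e⟩ := h
  refine ⟨e.symm ((0, fun _ => ![1, 0]), 0), e.symm ((0, fun _ => ![0, 1]), 0), ?_, ?_⟩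
  · rw [e.symm.map_app]
    simp [hypQF, binsQF, binQF_apply]
  · simp only [polar, ← map_add, e.symm.map_app]
    simp [hypQF, binsQF, binQF_apply]

lemma map_smul_binQF_prod_diagQF_apply {R S : Type} [CommRing R] [CommRing S] (f : R →+* S)
    (a b e : R) {s : ℕ} (c : Fin s → R) (v : (Fin 2 → R) × (Fin s → R)) :
    f (((e • binQF a b).prod (diagQF c)) v) =
      ((f e • binQF (f a) (f b)).prod (diagQF (f ∘ c))) (f ∘ v.1, f ∘ v.2) := by
  simp [binQF_apply, diagQF, weightedSumSquares_apply, map_sum]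

lemma mem_range_binQF_of_isotropic {L : Type} [Field L] [CharP L 2] {a : L} {u : Fin 2 → L}
    (hu : u ≠ 0) (h : binQF 1 a u = 0) (b : L) : b ∈ Set.range (binQF 1 a) := by
  rw [binQF_apply] at h
  have hu₁ : u 1 ≠ 0 := by
    intro hu₁
    have hu₀ : u 0 = 0 := by simpa [hu₁] using h
    exact hu (funext (Fin.forall_fin_two.mpr ⟨hu₀, hu₁⟩))
  set t := u 0 / u 1
  have ht : a = t ^ 2 + t := by
    field_simp
    grind
  -- in characteristic 2, `p² + pq + (t² + t)q² = (p + tq)(p + (t + 1)q)`, and the two factors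
  -- are `b` and `1` at this vector
  refine ⟨![b + t * (b + 1), b + 1], ?_⟩
  rw [binQF_apply]
  simp only [Matrix.cons_val_zero, Matrix.cons_val_one, Matrix.cons_val_fin_one]
  grind

lemma mem_range_binQF_of_mul_eq_sq {L : Type} [Field L] [CharP L 2] {a b w : L} {u : Fin 2 → L}
    (hu : u ≠ 0) (h : b * binQF 1 a u = w ^ 2) : b ∈ Set.range (binQF 1 a) := by
  by_cases hN : binQF 1 a u = 0
  · exact mem_range_binQF_of_isotropic hu hN b
  · refine ⟨(w / binQF 1 a u) • u, ?_⟩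
    rw [QuadraticMap.map_smul, smul_eq_mul]
    field_simp
    linear_combination -h

namespace QuatAlg

variable {L : Type} [Field L] (a b : L)

noncomputable def mk : FreeAlgebra L (Fin 2) →ₐ[L] QuatAlg L a b :=
  RingQuot.mkAlgHom L (QuatRel L a b)

noncomputable def i : QuatAlg L a b := mk a b (FreeAlgebra.ι L 0)

noncomputable def j : QuatAlg L a b := mk a b (FreeAlgebra.ι L 1)

lemma mk_surjective : Function.Surjective (mk a b) := RingQuot.mkAlgHom_surjective L _

lemma i_mul_i : i a b * i a b = a • 1 - i a b := by
  have h := RingQuot.mkAlgHom_rel L (QuatRel.i_sq (a := a) (b := b))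
  rw [map_add, map_mul, AlgHom.commutes, Algebra.algebraMap_eq_smul_one] at h
  exact eq_sub_of_add_eq h

lemma j_mul_j : j a b * j a b = b • 1 := by
  have h := RingQuot.mkAlgHom_rel L (QuatRel.j_sq (a := a) (b := b))
  rwa [map_mul, AlgHom.commutes, Algebra.algebraMap_eq_smul_one] at h

lemma j_mul_i : j a b * i a b = i a b * j a b + j a b := by
  have h := RingQuot.mkAlgHom_rel L (QuatRel.swap (a := a) (b := b))
  rwa [map_add, map_mul, map_mul] at h

lemma i_mul_ij : i a b * (i a b * j a b) = a • j a b - i a b * j a b := by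
  rw [← mul_assoc, i_mul_i, sub_mul, smul_mul_assoc, one_mul]

lemma j_mul_ij : j a b * (i a b * j a b) = b • i a b + b • 1 := by
  rw [← mul_assoc, j_mul_i, add_mul, mul_assoc, j_mul_j, mul_smul_comm, mul_one]

lemma span_range_eq_top :
    Submodule.span L (Set.range ![1, i a b, j a b, i a b * j a b]) = ⊤ := by
  set S := Submodule.span L (Set.range ![1, i a b, j a b, i a b * j a b])
  have mem_S : ∀ c₀ c₁ c₂ c₃ : L,
      c₀ • 1 + c₁ • i a b + c₂ • j a b + c₃ • (i a b * j a b) ∈ S := fun c₀ c₁ c₂ c₃ =>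
    (Submodule.mem_span_range_iff_exists_fun L).mpr
      ⟨![c₀, c₁, c₂, c₃], by simp [Fin.sum_univ_four, add_assoc]⟩
  have mul_mem_S : ∀ g, (∀ n, g * ![1, i a b, j a b, i a b * j a b] n ∈ S) → ∀ z ∈ S, g * z ∈ S :=
    fun g hg z hz => (Submodule.span_le (p := S.comap (LinearMap.mulLeft L g))).mpr
      (by rintro _ ⟨n, rfl⟩; exact hg n) hz
  have hi : ∀ z ∈ S, i a b * z ∈ S := mul_mem_S _ fun n => by
    fin_cases n
    · simpa using mem_S 0 1 0 0
    · simpa [i_mul_i, sub_eq_add_neg] using mem_S a (-1) 0 0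
    · simpa using mem_S 0 0 0 1
    · simpa [i_mul_ij, sub_eq_add_neg] using mem_S 0 0 a (-1)
  have hj : ∀ z ∈ S, j a b * z ∈ S := mul_mem_S _ fun n => by
    fin_cases n
    · simpa using mem_S 0 0 1 0
    · simpa [j_mul_i, add_comm] using mem_S 0 0 1 1
    · simpa [j_mul_j] using mem_S b 0 0 0
    · simpa [j_mul_ij, add_comm] using mem_S b b 0 0
  have h_mul : ∀ w : FreeAlgebra L (Fin 2), ∀ z ∈ S, mk a b w * z ∈ S := by
    intro w
    induction w using FreeAlgebra.induction with
    | grade0 r => intro z hz; simpa [Algebra.algebraMap_eq_smul_one] using S.smul_mem r hz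
    | grade1 n => fin_cases n; exacts [hi, hj]
    | mul u v hu hv => intro z hz; rw [map_mul, mul_assoc]; exact hu _ (hv z hz)
    | add u v hu hv => intro z hz; rw [map_add, add_mul]; exact S.add_mem (hu z hz) (hv z hz)
  refine eq_top_iff.mpr fun z _ => ?_
  obtain ⟨w, rfl⟩ := mk_surjective a b z
  simpa using h_mul w 1 (by simpa using mem_S 1 0 0 0)

end QuatAlg

theorem QuatSplit.of_linearIndependent {L : Type} [Field L] {a b : L}
    (I J : Matrix (Fin 2) (Fin 2) L) (hI : I * I + I = a • 1) (hJ : J * J = b • 1)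
    (hJI : J * I = I * J + J) (hind : LinearIndependent L ![1, I, J, I * J]) :
    QuatSplit L a b := by
  let f : FreeAlgebra L (Fin 2) →ₐ[L] Matrix (Fin 2) (Fin 2) L := FreeAlgebra.lift L ![I, J]
  have hf : ∀ ⦃u v⦄, QuatRel L a b u v → f u = f v := by
    intro u v h
    cases h <;> simp [f, Algebra.algebraMap_eq_smul_one, hI, hJ, hJI]
  let φ : QuatAlg L a b →ₐ[L] Matrix (Fin 2) (Fin 2) L := RingQuot.liftAlgHom L ⟨f, hf⟩
  have hφ : φ ∘ ![1, QuatAlg.i a b, QuatAlg.j a b, QuatAlg.i a b * QuatAlg.j a b] =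
      ![1, I, J, I * J] := by
    have hi : φ (QuatAlg.i a b) = I :=
      (RingQuot.liftAlgHom_mkAlgHom_apply L f hf _).trans (by simp [f])
    have hj : φ (QuatAlg.j a b) = J :=
      (RingQuot.liftAlgHom_mkAlgHom_apply L f hf _).trans (by simp [f])
    ext1 n; fin_cases n <;> simp [hi, hj]
  let B := Module.Basis.mk
    (LinearIndependent.of_comp φ.toLinearMap (by rwa [AlgHom.coe_toLinearMap, hφ]))
    (QuatAlg.span_range_eq_top a b).ge
  have : FiniteDimensional L (QuatAlg L a b) := .of_basis B
  have hsurj : Function.Surjective φ := by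
    rw [← AlgHom.coe_toLinearMap, ← LinearMap.range_eq_top, LinearMap.range_eq_map, ← B.span_eq,
      Submodule.map_span, ← Set.range_comp, Module.Basis.coe_mk, AlgHom.coe_toLinearMap, hφ]
    exact hind.span_eq_top_of_card_eq_finrank (by simp [Module.finrank_matrix])
  have hinj : Function.Injective φ.toLinearMap :=
    (LinearMap.injective_iff_surjective_of_finrank_eq_finrank
      (by simp [Module.finrank_eq_card_basis B, Module.finrank_matrix])).mpr hsurj
  exact ⟨AlgEquiv.ofBijective φ ⟨hinj, hsurj⟩⟩

theorem QuatSplit.of_mem_range_binQF {L : Type} [Field L] [CharP L 2] {a b : L} (hb : b ≠ 0)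
    (hN : b ∈ Set.range (binQF 1 a)) : QuatSplit L a b := by
  obtain ⟨v, rfl⟩ := hN
  rw [binQF_apply] at hb ⊢
  refine QuatSplit.of_linearIndependent !![0, a; 1, 1] !![v 0, v 0 + a * v 1; v 1, v 0]
    ?_ ?_ ?_ (Fintype.linearIndependent_iff.mpr fun g hg n => ?_)
  iterate 3 ext m n; fin_cases m <;> fin_cases n <;> simp [Matrix.mul_apply] <;> grind
  have e := fun m n => congrFun (congrFun hg m) n
  simp [Fin.sum_univ_four] at e
  fin_cases n <;> grind

theorem QuatSplit.of_isotropic {L : Type} [Field L] [CharP L 2] {a b : L} (hb : b ≠ 0) {s : ℕ}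
    {c : Fin s → L} (hc : ∀ i, ∃ r, r ^ 2 = c i) {v : (Fin 2 → L) × (Fin s → L)}
    (hv₁ : v.1 ≠ 0) (hv : ((b • binQF 1 a).prod (diagQF c)) v = 0) : QuatSplit L a b := by
  choose r hr using hc
  refine .of_mem_range_binQF hb (mem_range_binQF_of_mul_eq_sq hv₁ (w := ∑ i, r i * v.2 i) ?_)
  rw [prod_apply, smul_apply, smul_eq_mul, diagQF_apply_eq_sq hr] at hv
  grind

lemma exists_sq_eq_algebraMap_sqrtExt {K : Type} [Field K] {s : ℕ} (c : Fin s → K) (i : Fin s) :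
    ∃ r : sqrtExt K c, r ^ 2 = algebraMap K (sqrtExt K c) (c i) := by
  obtain ⟨y, hy⟩ := IsAlgClosed.exists_pow_nat_eq (algebraMap K (AlgebraicClosure K) (c i))
    two_pos
  exact ⟨⟨y, IntermediateField.subset_adjoin _ _ ⟨i, hy⟩⟩, Subtype.ext hy⟩

theorem stmt11_general (F : Type) [Field F] [CharP F 2] (a x : Fˣ) (s : ℕ) (c : Fin s → Fˣ)
    (K : Type) [Field K] [Algebra F K]
    (hW : ∃ (n0 k : ℕ) (φan : QuadraticForm K (Fin k → K)), φan.Anisotropic ∧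
      (((algebraMap F K (a : F)) • binQF 1 (algebraMap F K (x : F))).prod
        (diagQF (Matrix.vecCons 1 fun i => algebraMap F K (c i : F)))).Equivalent
        ((φan.prod (hypQF K 1)).prod (diagQF fun _ : Fin n0 => (0 : K)))) :
    QuatSplit (↥(sqrtExt K fun i => algebraMap F K (c i : F)))
      (algebraMap K (↥(sqrtExt K fun i => algebraMap F K (c i : F)))
        (algebraMap F K (x : F)))
      (algebraMap K (↥(sqrtExt K fun i => algebraMap F K (c i : F)))
        (algebraMap F K (a : F))) := by
  obtain ⟨_, _, _, -, hφ⟩ := hW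
  have : CharP K 2 := charP_of_injective_algebraMap (algebraMap F K).injective 2
  obtain ⟨v, w, hv, hvw⟩ := exists_isotropic_polar_ne_zero hφ
  have hv₁ : v.1 ≠ 0 := fst_ne_zero_of_polar_prod_diagQF_ne_zero hvw
  set L := sqrtExt K fun i => algebraMap F K (c i : F)
  have : CharP L 2 := charP_of_injective_algebraMap (algebraMap K L).injective 2
  set ρ := algebraMap K L
  refine QuatSplit.of_isotropic (by simp) (c := ρ ∘ Matrix.vecCons 1 fun i => algebraMap F K (c i))
    ?_ (v := (ρ ∘ v.1, ρ ∘ v.2)) ?_ ?_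
  · refine Fin.cases ⟨1, by simp⟩ fun i => ?_
    simpa only [Function.comp_apply, Matrix.cons_val_succ] using exists_sq_eq_algebraMap_sqrtExt _ i
  · exact fun h => hv₁ (funext fun n => ρ.injective (by simpa using congrFun h n))
  · rw [← map_one ρ, ← map_smul_binQF_prod_diagQF_apply, hv, map_zero]

theorem stmt11 (F : Type) [Field F] [CharP F 2] (a x : Fˣ) (s : ℕ) (c : Fin s → Fˣ)
    (hφa : (((a : F) • binQF 1 (x : F)).prod
      (diagQF (Matrix.vecCons 1 fun i => (c i : F)))).Anisotropic)
    (K : Type) [Field K] [Algebra F K]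
    (hW : ∃ (n0 k : ℕ) (φan : QuadraticForm K (Fin k → K)), φan.Anisotropic ∧
      (((algebraMap F K (a : F)) • binQF 1 (algebraMap F K (x : F))).prod
        (diagQF (Matrix.vecCons 1 fun i => algebraMap F K (c i : F)))).Equivalent
        ((φan.prod (hypQF K 1)).prod (diagQF fun _ : Fin n0 => (0 : K)))) :
    QuatSplit (↥(sqrtExt K fun i => algebraMap F K (c i : F)))
      (algebraMap K (↥(sqrtExt K fun i => algebraMap F K (c i : F)))
        (algebraMap F K (x : F)))
      (algebraMap K (↥(sqrtExt K fun i => algebraMap F K (c i : F)))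
        (algebraMap F K (a : F))) :=
  stmt11_general F a x s c K hW
end

section
/- Let F be a field of characteristic 2 and let μ, ν, φ be quadratic forms over F (μ and ν possibly singular) with φ nonsingular. If μ ⊥ φ ≅ ν ⊥ φ, then μ ≅ ν. -/
open QuadraticMap MvPolynomial
open scoped TensorProduct

set_option synthInstance.maxHeartbeats 1000000
set_option maxHeartbeats 1000000


/-!
A nonsingular form is an orthogonal sum of binary planes `[a,b]`, so it suffices to cancel one
plane `P` with basis `e, f`, `b(e,f) = 1`. The isometry group of any quadratic space acts
transitively on pairs `(u, u')` with prescribed `Q u`, `Q u'` and `b(u,u') = 1`; composing a given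
isometry `μ ⊥ P ≅ ν ⊥ P` with an isometry of `ν ⊥ P` therefore makes it fix `P` pointwise, and then
it maps `P^⊥ = μ` onto `P^⊥ = ν`. In characteristic two the polar form is alternating, so there
are no reflections; transitivity comes instead from the orthogonal transvections
`x ↦ x + b(w,x)/Q(w) w` (for `Q w ≠ 0`, named `reflection` below) and from Eichler
transformations (for isotropic vectors).
-/

lemma add_self_eq_zero_of_charTwo (R : Type*) {M : Type*} [CommRing R] [CharP R 2]
    [AddCommGroup M] [Module R M] (x : M) : x + x = 0 := by
  rw [← two_smul R x, CharTwo.two_eq_zero, zero_smul]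

lemma LinearMap.exists_apply_ne_zero_and_apply_ne_zero {R M N : Type*} [Semiring R]
    [AddCommMonoid M] [Module R M] [AddCommMonoid N] [Module R N] (f g : M →ₗ[R] N) {x y : M}
    (hx : f x ≠ 0) (hy : g y ≠ 0) : ∃ z, f z ≠ 0 ∧ g z ≠ 0 := by
  by_cases hgx : g x = 0
  · by_cases hfy : f y = 0
    · exact ⟨x + y, by rwa [map_add, hfy, add_zero], by rwa [map_add, hgx, zero_add]⟩
    · exact ⟨y, hfy, hy⟩
  · exact ⟨x, hx, hgx⟩

namespace QuadraticMap

section Isometry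

variable {R M M₁ M₂ M₃ : Type*} [CommRing R] [AddCommGroup M] [Module R M]
  [AddCommGroup M₁] [Module R M₁] [AddCommGroup M₂] [Module R M₂] [AddCommGroup M₃] [Module R M₃]

lemma IsometryEquiv.polar_map {Q₁ : QuadraticForm R M₁} {Q₂ : QuadraticForm R M₂}
    (τ : Q₁.IsometryEquiv Q₂) (x y : M₁) : polar Q₂ (τ x) (τ y) = polar Q₁ x y := by
  simp only [polar, ← map_add, IsometryEquiv.map_app]

def IsometryEquiv.ofInvolutive {Q : QuadraticForm R M} (f : M →ₗ[R] M)
    (hf : Function.Involutive f) (hQ : ∀ x, Q (f x) = Q x) : Q.IsometryEquiv Q :=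
  { LinearEquiv.ofInvolutive f hf with map_app' := hQ }

def IsometryEquiv.prodAssoc (Q₁ : QuadraticForm R M₁) (Q₂ : QuadraticForm R M₂)
    (Q₃ : QuadraticForm R M₃) :
    ((Q₁.prod Q₂).prod Q₃).IsometryEquiv (Q₁.prod (Q₂.prod Q₃)) :=
  { LinearEquiv.prodAssoc R M₁ M₂ M₃ with map_app' := fun _ => (add_assoc _ _ _).symm }

def IsometryEquiv.prodUnique [Unique M₂] (Q₁ : QuadraticForm R M₁) (Q₂ : QuadraticForm R M₂) :
    (Q₁.prod Q₂).IsometryEquiv Q₁ :=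
  { LinearEquiv.prodUnique with map_app' := fun x => by simp [Subsingleton.elim x.2 0] }

end Isometry

section CharTwo

variable {R M : Type*} [CommRing R] [AddCommGroup M] [Module R M] {Q : QuadraticForm R M}

def eichlerMap (Q : QuadraticForm R M) (z y : M) : M →ₗ[R] M :=
  LinearMap.id + (polarBilin Q y).smulRight z + (polarBilin Q z).smulRight (y + Q y • z)

lemma eichlerMap_apply (z y x : M) :
    eichlerMap Q z y x = x + polar Q y x • z + polar Q z x • (y + Q y • z) := rfl

variable [CharP R 2]

lemma polar_self_eq_zero_of_charTwo (x : M) : polar Q x x = 0 := by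
  rw [polar_self, CharTwo.two_nsmul]

lemma map_add_eq_polar_of_map_eq {u v : M} (h : Q u = Q v) : Q (u + v) = polar Q u v := by
  rw [polar, h, CharTwo.sub_eq_add, CharTwo.sub_eq_add, add_assoc, CharTwo.add_self_eq_zero,
    add_zero]

variable {z y : M}

lemma polar_eichlerMap (hzy : polar Q z y = 0) (x : M) :
    polar Q y (eichlerMap Q z y x) = polar Q y x ∧
      polar Q z (eichlerMap Q z y x) = polar Q z x := by
  have hyz : polar Q y z = 0 := by rw [polar_comm]; exact hzy
  simp only [eichlerMap_apply, polar_add_right, polar_smul_right, hzy, hyz,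
    polar_self_eq_zero_of_charTwo, smul_eq_mul]
  constructor <;> ring

lemma eichlerMap_involutive (hzy : polar Q z y = 0) :
    Function.Involutive (eichlerMap Q z y) := fun x => by
  obtain ⟨hy, hz⟩ := polar_eichlerMap hzy x
  set a := polar Q y x • z
  set b := polar Q z x • (y + Q y • z)
  calc eichlerMap Q z y (eichlerMap Q z y x) = x + (a + a) + (b + b) := by
        rw [eichlerMap_apply (x := eichlerMap Q z y x), hy, hz, eichlerMap_apply]; abel
    _ = x := by
        rw [add_self_eq_zero_of_charTwo R, add_self_eq_zero_of_charTwo R, add_zero, add_zero]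

lemma map_eichlerMap (hz : Q z = 0) (hzy : polar Q z y = 0) (x : M) :
    Q (eichlerMap Q z y x) = Q x := by
  have hyz : polar Q y z = 0 := by rw [polar_comm]; exact hzy
  simp only [eichlerMap_apply, QuadraticMap.map_add Q, QuadraticMap.map_smul, polar_add_left,
    polar_add_right, polar_smul_left, polar_smul_right, hz, hzy, hyz,
    polar_self_eq_zero_of_charTwo, smul_eq_mul]
  rw [polar_comm Q x z, polar_comm Q x y]
  linear_combination (polar Q z x * polar Q y x + polar Q z x ^ 2 * Q y) *
    (CharTwo.two_eq_zero : (2 : R) = 0)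

def eichler (z y : M) (hz : Q z = 0) (hzy : polar Q z y = 0) : Q.IsometryEquiv Q :=
  IsometryEquiv.ofInvolutive (eichlerMap Q z y) (eichlerMap_involutive hzy)
    (map_eichlerMap hz hzy)

lemma eichler_apply (z y : M) (hz : Q z = 0) (hzy : polar Q z y = 0) (x : M) :
    eichler z y hz hzy x = x + polar Q y x • z + polar Q z x • (y + Q y • z) := rfl

end CharTwo

section Field

variable {F V : Type*} [Field F] [AddCommGroup V] [Module F V] {Q : QuadraticForm F V}

def reflectionMap (Q : QuadraticForm F V) (w : V) : V →ₗ[F] V :=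
  LinearMap.id + ((Q w)⁻¹ • polarBilin Q w).smulRight w

lemma reflectionMap_apply (w x : V) :
    reflectionMap Q w x = x + ((Q w)⁻¹ * polar Q w x) • w := rfl

variable [CharP F 2]

lemma reflectionMap_involutive (w : V) : Function.Involutive (reflectionMap Q w) := fun x => by
  have hw : polar Q w (reflectionMap Q w x) = polar Q w x := by
    rw [reflectionMap_apply, polar_add_right, polar_smul_right, polar_self_eq_zero_of_charTwo,
      smul_zero, add_zero]
  rw [reflectionMap_apply (x := reflectionMap Q w x), hw, reflectionMap_apply, add_assoc,
    add_self_eq_zero_of_charTwo F, add_zero]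

lemma map_reflectionMap {w : V} (hw : Q w ≠ 0) (x : V) : Q (reflectionMap Q w x) = Q x := by
  have hc : (Q w)⁻¹ * polar Q w x * ((Q w)⁻¹ * polar Q w x) * Q w
      = (Q w)⁻¹ * polar Q w x * polar Q w x := by
    field_simp
  rw [reflectionMap_apply, QuadraticMap.map_add Q, QuadraticMap.map_smul, polar_smul_right,
    polar_comm Q x w, smul_eq_mul, smul_eq_mul, hc, add_assoc, CharTwo.add_self_eq_zero, add_zero]

def reflection (w : V) (hw : Q w ≠ 0) : Q.IsometryEquiv Q :=
  IsometryEquiv.ofInvolutive (reflectionMap Q w) (reflectionMap_involutive w)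
    (map_reflectionMap hw)

lemma reflection_apply (w : V) (hw : Q w ≠ 0) (x : V) :
    reflection w hw x = x + ((Q w)⁻¹ * polar Q w x) • w := rfl

variable {u v w : V}

lemma exists_isometryEquiv_apply_eq_of_polar_ne_zero (huv : Q u = Q v) (hp : polar Q u v ≠ 0) :
    ∃ τ : Q.IsometryEquiv Q, τ u = v ∧ ∀ x, polar Q (u + v) x = 0 → τ x = x := by
  have hw : Q (u + v) ≠ 0 := by rwa [map_add_eq_polar_of_map_eq huv]
  refine ⟨reflection (u + v) hw, ?_, fun x hx => ?_⟩
  · have hwu : polar Q (u + v) u = Q (u + v) := by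
      rw [polar_add_left, polar_self_eq_zero_of_charTwo, zero_add, polar_comm,
        map_add_eq_polar_of_map_eq huv]
    rw [reflection_apply, hwu, inv_mul_cancel₀ hw, one_smul, ← add_assoc,
      add_self_eq_zero_of_charTwo F, zero_add]
  · rw [reflection_apply, hx, mul_zero, zero_smul, add_zero]

lemma exists_isometryEquiv_apply_eq_via_anisotropic (huv : Q u = Q v) (hp : polar Q u v = 0)
    (hw : Q w ≠ 0) (hwu : polar Q w u ≠ 0) (hwv : polar Q w v ≠ 0) :
    ∃ τ : Q.IsometryEquiv Q, τ u = v := by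
  have hp' : polar Q (reflection w hw u) v ≠ 0 := by
    rw [reflection_apply, polar_add_left, hp, polar_smul_left, zero_add, smul_eq_mul]
    exact mul_ne_zero (mul_ne_zero (inv_ne_zero hw) hwu) hwv
  obtain ⟨τ, hτ, -⟩ :=
    exists_isometryEquiv_apply_eq_of_polar_ne_zero ((reflection w hw).map_app u |>.trans huv) hp'
  exact ⟨(reflection w hw).trans τ, hτ⟩

lemma exists_isometryEquiv_apply_eq_via_isotropic (huv : Q u = Q v) (hp : polar Q u v = 0)
    (hw : Q w = 0) (hwu : polar Q w u ≠ 0) (hwuv : polar Q w u = polar Q w v) :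
    ∃ τ : Q.IsometryEquiv Q, τ u = v := by
  set y := (polar Q w u)⁻¹ • (u + v) with hy_def
  have hwy : polar Q w y = 0 := by
    rw [polar_smul_right, polar_add_right, hwuv, CharTwo.add_self_eq_zero, smul_zero]
  have hyu : polar Q y u = 0 := by
    rw [polar_smul_left, polar_add_left, polar_self_eq_zero_of_charTwo, polar_comm Q v, hp,
      add_zero, smul_zero]
  have hy : Q y = 0 := by
    rw [QuadraticMap.map_smul, map_add_eq_polar_of_map_eq huv, hp, smul_zero]
  refine ⟨eichler w y hw hwy, ?_⟩
  rw [eichler_apply, hyu, hy, zero_smul, add_zero, add_zero, hy_def, smul_smul,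
    mul_inv_cancel₀ hwu, one_smul, ← add_assoc, add_self_eq_zero_of_charTwo F, zero_add]

lemma exists_isometryEquiv_apply_eq_via (huv : Q u = Q v) (hwu : polar Q w u ≠ 0)
    (hwv : polar Q w v ≠ 0) : ∃ τ : Q.IsometryEquiv Q, τ u = v := by
  obtain hp | hp := ne_or_eq (polar Q u v) 0
  · obtain ⟨τ, hτ, -⟩ := exists_isometryEquiv_apply_eq_of_polar_ne_zero huv hp
    exact ⟨τ, hτ⟩
  have hvu : polar Q v u = 0 := by rw [polar_comm]; exact hp
  have hpu : ∀ x, polar Q (x + u) u = polar Q x u := fun x => by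
    rw [polar_add_left, polar_self_eq_zero_of_charTwo, add_zero]
  have hpv : ∀ x, polar Q (x + v) v = polar Q x v := fun x => by
    rw [polar_add_left, polar_self_eq_zero_of_charTwo, add_zero]
  obtain hw | hw := ne_or_eq (Q w) 0
  · exact exists_isometryEquiv_apply_eq_via_anisotropic huv hp hw hwu hwv
  obtain hwu' | hwu' := ne_or_eq (Q (w + u)) 0
  · refine exists_isometryEquiv_apply_eq_via_anisotropic huv hp hwu' (by rwa [hpu]) ?_
    rwa [polar_add_left, hp, add_zero]
  obtain hwv' | hwv' := ne_or_eq (Q (w + v)) 0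
  · refine exists_isometryEquiv_apply_eq_via_anisotropic huv hp hwv' ?_ (by rwa [hpv])
    rwa [polar_add_left, hvu, add_zero]
  -- `w`, `w + u` and `w + v` all isotropic force `b(w,u) = Q(u) = Q(v) = b(w,v)`
  have hpolar : ∀ x, Q (w + x) = 0 → polar Q w x = Q x := fun x hx => by
    rw [QuadraticMap.map_add Q, hw, zero_add] at hx
    exact (CharTwo.add_eq_zero.mp hx).symm
  exact exists_isometryEquiv_apply_eq_via_isotropic huv hp hw hwu
    (by rw [hpolar u hwu', hpolar v hwv', huv])

lemma exists_isometryEquiv_apply_eq {u' v' : V} (huv : Q u = Q v) (hu : polar Q u u' ≠ 0)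
    (hv : polar Q v v' ≠ 0) : ∃ τ : Q.IsometryEquiv Q, τ u = v := by
  obtain ⟨w, hwu, hwv⟩ :=
    (polarBilin Q u).exists_apply_ne_zero_and_apply_ne_zero (polarBilin Q v) hu hv
  rw [polarBilin_apply_apply, polar_comm] at hwu hwv
  exact exists_isometryEquiv_apply_eq_via huv hwu hwv

lemma exists_isometryEquiv_apply_eq_self_and_apply_eq {e f₁ f₂ : V} (hf : Q f₁ = Q f₂)
    (h₁ : polar Q e f₁ = 1) (h₂ : polar Q e f₂ = 1) :
    ∃ τ : Q.IsometryEquiv Q, τ e = e ∧ τ f₁ = f₂ := by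
  have he : polar Q (f₁ + f₂) e = 0 := by
    rw [polar_add_left, polar_comm, h₁, polar_comm, h₂, CharTwo.add_self_eq_zero]
  obtain hp | hp := ne_or_eq (polar Q f₁ f₂) 0
  · obtain ⟨τ, hτ, hfix⟩ := exists_isometryEquiv_apply_eq_of_polar_ne_zero hf hp
    exact ⟨τ, hfix e he, hτ⟩
  have hf₁ : polar Q (f₁ + f₂) f₁ = 0 := by
    rw [polar_add_left, polar_self_eq_zero_of_charTwo, polar_comm, hp, add_zero]
  refine ⟨eichler (f₁ + f₂) e (by rw [map_add_eq_polar_of_map_eq hf, hp]) he, ?_, ?_⟩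
  · rw [eichler_apply, polar_self_eq_zero_of_charTwo, he, zero_smul, zero_smul, add_zero,
      add_zero]
  · rw [eichler_apply, h₁, hf₁, one_smul, zero_smul, add_zero, ← add_assoc,
      add_self_eq_zero_of_charTwo F, zero_add]

lemma exists_isometryEquiv_apply_eq_and_apply_eq {u₂ v₂ : V} (hu : Q u = Q v)
    (hu₂ : Q u₂ = Q v₂) (h : polar Q u u₂ = 1) (h' : polar Q v v₂ = 1) :
    ∃ τ : Q.IsometryEquiv Q, τ u = v ∧ τ u₂ = v₂ := by
  obtain ⟨τ₁, hτ₁⟩ := exists_isometryEquiv_apply_eq hu (h ▸ one_ne_zero) (h' ▸ one_ne_zero)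
  obtain ⟨τ₂, hτ₂v, hτ₂⟩ := exists_isometryEquiv_apply_eq_self_and_apply_eq
    ((τ₁.map_app u₂).trans hu₂) (by rw [← hτ₁, τ₁.polar_map, h]) h'
  exact ⟨τ₁.trans τ₂, (congrArg τ₂ hτ₁).trans hτ₂v, hτ₂⟩

end Field

section Cancel

variable {R M₁ M₂ W : Type*} [CommRing R] [AddCommGroup M₁] [Module R M₁] [AddCommGroup M₂]
  [Module R M₂] [AddCommGroup W] [Module R W]
  {μ : QuadraticForm R M₁} {ν : QuadraticForm R M₂} {P : QuadraticForm R W}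

lemma IsometryEquiv.snd_apply_inl_eq_zero (hP : (polarBilin P).SeparatingLeft)
    (ρ : (μ.prod P).IsometryEquiv (ν.prod P)) (hρ : ∀ p, ρ (0, p) = (0, p)) (x : M₁) :
    (ρ (x, 0)).2 = 0 :=
  hP _ fun p => by simpa [hρ] using ρ.polar_map (x, 0) (0, p)

lemma equivalent_of_isometryEquiv_prod_fixing_snd (hP : (polarBilin P).SeparatingLeft)
    (ρ : (μ.prod P).IsometryEquiv (ν.prod P)) (hρ : ∀ p, ρ (0, p) = (0, p)) :
    μ.Equivalent ν := by
  have hρ' : ∀ p, ρ.symm (0, p) = (0, p) := fun p => ρ.symm_apply_eq.mpr (hρ p).symm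
  have hinl : ∀ x, ρ (x, 0) = ((ρ (x, 0)).1, 0) := fun x =>
    Prod.ext rfl (ρ.snd_apply_inl_eq_zero hP hρ x)
  have hinl' : ∀ y, ρ.symm (y, 0) = ((ρ.symm (y, 0)).1, 0) := fun y =>
    Prod.ext rfl (ρ.symm.snd_apply_inl_eq_zero hP hρ' y)
  let g : M₁ →ₗ[R] M₂ :=
    LinearMap.fst R M₂ W ∘ₗ ρ.toLinearEquiv.toLinearMap ∘ₗ LinearMap.inl R M₁ W
  let g' : M₂ →ₗ[R] M₁ :=
    LinearMap.fst R M₁ W ∘ₗ ρ.symm.toLinearEquiv.toLinearMap ∘ₗ LinearMap.inl R M₂ W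
  refine ⟨⟨LinearEquiv.ofLinearMap g g' ?_ ?_, fun x => ?_⟩⟩
  · ext y
    change (ρ ((ρ.symm (y, 0)).1, 0)).1 = y
    rw [← hinl', ρ.apply_symm_apply]
  · ext x
    change (ρ.symm ((ρ (x, 0)).1, 0)).1 = x
    rw [← hinl, ρ.symm_apply_apply]
  · have h := ρ.map_app (x, 0)
    rw [hinl] at h
    change ν (ρ (x, 0)).1 = μ x
    simpa using h

end Cancel

section Binary

variable {K : Type} [CommRing K]

lemma binQF_apply (a b : K) (x : Fin 2 → K) :
    binQF a b x = a * x 0 ^ 2 + x 0 * x 1 + b * x 1 ^ 2 := by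
  simp [binQF, Matrix.toQuadraticMap', Matrix.toQuadraticForm', Matrix.toLinearMap₂'_apply,
    Fin.sum_univ_two]
  ring

def binsQFConsIsometryEquiv {r : ℕ} (a b : Fin (r + 1) → K) :
    ((binQF (a 0) (b 0)).prod (binsQF (Fin.tail a) (Fin.tail b))).IsometryEquiv (binsQF a b) :=
  { Fin.consLinearEquiv K (fun _ => Fin 2 → K) with
    map_app' := fun x => by simp [binsQF, Fin.sum_univ_succ, Fin.tail] }

lemma equivalent_prod_binQF_prod_binsQF_tail {M : Type*} [AddCommGroup M] [Module K M]
    (q : QuadraticForm K M) {r : ℕ} (a b : Fin (r + 1) → K) :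
    ((q.prod (binQF (a 0) (b 0))).prod (binsQF (Fin.tail a) (Fin.tail b))).Equivalent
      (q.prod (binsQF a b)) :=
  ⟨(IsometryEquiv.prodAssoc _ _ _).trans
    ((IsometryEquiv.refl q).prod (binsQFConsIsometryEquiv a b))⟩

variable {F : Type} [Field F] [CharP F 2]

lemma polar_binQF (a b : F) (x y : Fin 2 → F) :
    polar (binQF a b) x y = x 0 * y 1 + x 1 * y 0 := by
  simp only [polar, binQF_apply, Pi.add_apply]
  linear_combination (a * x 0 * y 0 + b * x 1 * y 1) * (CharTwo.two_eq_zero : (2 : F) = 0)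

lemma separatingLeft_polarBilin_binQF (a b : F) : (polarBilin (binQF a b)).SeparatingLeft := by
  intro x hx
  have h₀ : x 0 = 0 := by simpa [polar_binQF] using hx (Pi.single 1 1)
  have h₁ : x 1 = 0 := by simpa [polar_binQF] using hx (Pi.single 0 1)
  ext i
  fin_cases i
  exacts [h₀, h₁]

lemma equivalent_of_prod_binQF_equivalent {M₁ M₂ : Type*} [AddCommGroup M₁] [Module F M₁]
    [AddCommGroup M₂] [Module F M₂] {μ : QuadraticForm F M₁} {ν : QuadraticForm F M₂} {a b : F}
    (h : (μ.prod (binQF a b)).Equivalent (ν.prod (binQF a b))) : μ.Equivalent ν := by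
  obtain ⟨σ⟩ := h
  let e : Fin 2 → F := Pi.single 0 1
  let f : Fin 2 → F := Pi.single 1 1
  have hef : polar (binQF a b) e f = 1 := by simp [e, f, polar_binQF]
  obtain ⟨τ, hτe, hτf⟩ := exists_isometryEquiv_apply_eq_and_apply_eq (Q := ν.prod (binQF a b))
    (u := σ (0, e)) (v := (0, e)) (u₂ := σ (0, f)) (v₂ := (0, f))
    (by simp [σ.map_app]) (by simp [σ.map_app]) (by simp [σ.polar_map, hef]) (by simp [hef])
  have hinr : (σ.trans τ).toLinearEquiv.toLinearMap ∘ₗ LinearMap.inr F M₁ (Fin 2 → F) =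
      LinearMap.inr F M₂ (Fin 2 → F) :=
    (Pi.basisFun F (Fin 2)).ext fun i => by
      fin_cases i <;>
        simp only [Pi.basisFun_apply, LinearMap.coe_comp, LinearEquiv.coe_coe,
          IsometryEquiv.coe_toLinearEquiv, LinearMap.coe_inr, Function.comp_apply]
      exacts [hτe, hτf]
  exact equivalent_of_isometryEquiv_prod_fixing_snd (separatingLeft_polarBilin_binQF a b)
    (σ.trans τ) (LinearMap.congr_fun hinr)

lemma equivalent_of_prod_binsQF_equivalent {r : ℕ} (a b : Fin r → F) {M₁ M₂ : Type*}
    [AddCommGroup M₁] [Module F M₁] [AddCommGroup M₂] [Module F M₂]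
    {μ : QuadraticForm F M₁} {ν : QuadraticForm F M₂}
    (h : (μ.prod (binsQF a b)).Equivalent (ν.prod (binsQF a b))) : μ.Equivalent ν := by
  induction r generalizing M₁ M₂ with
  | zero =>
    exact ⟨((IsometryEquiv.prodUnique μ _).symm.trans h.some).trans
      (IsometryEquiv.prodUnique ν _)⟩
  | succ r ih =>
    refine equivalent_of_prod_binQF_equivalent (a := a 0) (b := b 0)
      (ih (Fin.tail a) (Fin.tail b) ?_)
    exact ((equivalent_prod_binQF_prod_binsQF_tail μ a b).trans h).trans
      (equivalent_prod_binQF_prod_binsQF_tail ν a b).symm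

end Binary

end QuadraticMap

theorem stmt12_general (F : Type) [Field F] [CharP F 2]
    {V₁ V₂ W : Type} [AddCommGroup V₁] [Module F V₁]
    [AddCommGroup V₂] [Module F V₂]
    [AddCommGroup W] [Module F W]
    (μ : QuadraticForm F V₁) (ν : QuadraticForm F V₂) (φ : QuadraticForm F W)
    (hφns : ∃ (r : ℕ) (a b : Fin r → F), φ.Equivalent (binsQF a b))
    (h : (μ.prod φ).Equivalent (ν.prod φ)) :
    μ.Equivalent ν := by
  obtain ⟨r, a, b, hφ⟩ := hφns
  exact equivalent_of_prod_binsQF_equivalent a b <|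
    ((Equivalent.refl μ).prod hφ.symm).trans (h.trans ((Equivalent.refl ν).prod hφ))

theorem stmt12 (F : Type) [Field F] [CharP F 2]
    {V₁ V₂ W : Type} [AddCommGroup V₁] [Module F V₁] [FiniteDimensional F V₁]
    [AddCommGroup V₂] [Module F V₂] [FiniteDimensional F V₂]
    [AddCommGroup W] [Module F W]
    (μ : QuadraticForm F V₁) (ν : QuadraticForm F V₂) (φ : QuadraticForm F W)
    (hφns : ∃ (r : ℕ) (a b : Fin r → F), φ.Equivalent (binsQF a b))
    (h : (μ.prod φ).Equivalent (ν.prod φ)) :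
    μ.Equivalent ν :=
  stmt12_general F μ ν φ hφns h
end
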